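/- arXiv:2008.01207 — 4 statements merged into one kernel-verified Lean document; each statement's English description precedes it below -/
import Mathlib

section
/- Let φ be an integrable function supported in [a,b] and z₀ ∈ ℂ with φ̂(z₀) = 0. Define ψ(t) = -i·e^{-i z₀ t}·∫_{-∞}^{t} e^{i z₀ s} φ(s) ds. Then ψ is integrable, supported in [a,b], and ψ̂(z) = φ̂(z)/(z - z₀) for all z ≠ z₀. -/
open MeasureTheory Complex Filter Set Topology

noncomputable section

/-- `f` is (a.e.) supported in `K`. -/
def suppIn (f : ℝ → ℂ) (K : Set ℝ) : Prop := ∀ᵐ t : ℝ, t ∉ K → f t = 0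

/-- The space `𝓛` of integrable functions of bounded support, as a subspace of `ℝ → ℂ`. -/
def LL : Submodule ℂ (ℝ → ℂ) where
  carrier := {f | Integrable f ∧ ∃ n : ℕ, suppIn f (Icc (-(n : ℝ)) n)}
  add_mem' := by
    rintro f g ⟨hf, n, hn⟩ ⟨hg, m, hm⟩
    refine ⟨hf.add hg, max n m, ?_⟩
    have h1 : (n : ℝ) ≤ ((max n m : ℕ) : ℝ) := by exact_mod_cast le_max_left n m
    have h2 : (m : ℝ) ≤ ((max n m : ℕ) : ℝ) := by exact_mod_cast le_max_right n m
    filter_upwards [hn, hm] with t hfn hgm ht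
    have hf0 : f t = 0 := hfn fun hmem => ht (Icc_subset_Icc (neg_le_neg h1) h1 hmem)
    have hg0 : g t = 0 := hgm fun hmem => ht (Icc_subset_Icc (neg_le_neg h2) h2 hmem)
    show f t + g t = 0
    rw [hf0, hg0, add_zero]
  zero_mem' := ⟨integrable_zero _ _ _, 0, Filter.Eventually.of_forall fun t _ => rfl⟩
  smul_mem' := by
    rintro c f ⟨hf, n, hn⟩
    refine ⟨hf.smul c, n, ?_⟩
    filter_upwards [hn] with t h ht
    show c • f t = 0
    rw [h ht, smul_zero]

/-- Elements of `𝓛` supported (a.e.) in `[-α, α]`. -/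
def Lset (α : ℝ) : Set LL := {φ | suppIn (φ : ℝ → ℂ) (Icc (-α) α)}

/-- The `L¹` distance on `𝓛`. -/
def L1dist (φ ψ : LL) : ℝ := ∫ t : ℝ, ‖(φ : ℝ → ℂ) t - (ψ : ℝ → ℂ) t‖

/-- The `L¹` (pseudometric) topology on `𝓛`, generated by the open balls. -/
def L1top : TopologicalSpace LL :=
  .generateFrom {B | ∃ φ : LL, ∃ ε : ℝ, 0 < ε ∧ B = {ψ | L1dist φ ψ < ε}}

/-- The strict inductive limit topology on `𝓛`: the finest topology making all the
inclusions `𝓛ₙ → 𝓛` continuous, where `𝓛ₙ` carries the `L¹` (Banach) topology. -/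
def LFtop : TopologicalSpace LL :=
  ⨆ n : ℕ, TopologicalSpace.coinduced (Subtype.val : Lset (n : ℝ) → LL)
    (TopologicalSpace.induced (Subtype.val : Lset (n : ℝ) → LL) L1top)

/-- The sequential closure of `A ⊆ 𝓛`: limits of sequences of elements of `A` with
supports in a common bounded interval, converging in `L¹`. -/
def seqCl (A : Set LL) : Set LL :=
  {φ | ∃ f : ℕ → LL, (∀ k, f k ∈ A) ∧ (∃ n : ℕ, ∀ k, f k ∈ Lset (n : ℝ)) ∧
    Tendsto (fun k => L1dist (f k) φ) atTop (nhds 0)}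

/-- Translation `τ_l` on `𝓛`. -/
def tauL (l : ℝ) (φ : LL) : LL :=
  ⟨fun t => (φ : ℝ → ℂ) (t - l), by
    obtain ⟨hint, n, hn⟩ := φ.2
    refine ⟨hint.comp_sub_right l, n + ⌈|l|⌉₊, ?_⟩
    have h2 : ∀ᵐ t : ℝ, (t - l) ∉ Icc (-(n : ℝ)) n → (φ : ℝ → ℂ) (t - l) = 0 :=
      (measurePreserving_sub_right volume l).quasiMeasurePreserving.ae hn
    filter_upwards [h2] with t ht hN
    refine ht fun hmem => hN ?_
    have habs : |t - l| ≤ (n : ℝ) := abs_le.mpr (mem_Icc.mp hmem)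
    have hl : |l| ≤ (⌈|l|⌉₊ : ℝ) := Nat.le_ceil _
    have htabs : |t| ≤ ((n + ⌈|l|⌉₊ : ℕ) : ℝ) := by
      have : |t| ≤ |t - l| + |l| := by
        calc |t| = |(t - l) + l| := by ring_nf
        _ ≤ |t - l| + |l| := abs_add_le _ _
      push_cast
      linarith
    exact mem_Icc.mpr (abs_le.mp htabs)⟩

/-- `E` is shift invariant. -/
def ShiftInv (E : Set LL) : Prop := ∀ φ ∈ E, ∀ l : ℝ, tauL l φ ∈ E

/-- The span of the translates `τ_l φ`, `φ ∈ E`, `l ∈ I`. -/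
def tauSpan (E : Set LL) (I : Set ℝ) : Submodule ℂ LL :=
  Submodule.span ℂ {ψ : LL | ∃ φ ∈ E, ∃ l ∈ I, ψ = tauL l φ}

/-- The Fourier transform `f̂(z) = ∫ e^{izt} f(t) dt`, for complex `z`. -/
def FT (f : ℝ → ℂ) (z : ℂ) : ℂ := ∫ t : ℝ, Complex.exp (Complex.I * z * t) * f t

/-- `V(f)`: pairs `(z, n)` such that `f̂⁽ᵏ⁾(z) = 0` for `k = 0, …, n`. -/
def Vfun (f : ℝ → ℂ) : Set (ℂ × ℕ) := {p | ∀ k ≤ p.2, iteratedDeriv k (FT f) p.1 = 0}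

/-- `V(A) = ⋂_{φ ∈ A} V(φ)`. -/
def VE (A : Set LL) : Set (ℂ × ℕ) := ⋂ φ ∈ A, Vfun (φ : ℝ → ℂ)

/-- `Z(f)`: the zero set of the Fourier transform of `f`. -/
def Zfun (f : ℝ → ℂ) : Set ℂ := {z | FT f z = 0}

/-- `Z(A) = ⋂_{φ ∈ A} Z(φ)`. -/
def ZE (A : Set LL) : Set ℂ := ⋂ φ ∈ A, Zfun (φ : ℝ → ℂ)

/-- `Λ(f)`: the lower edge of the support of `f`. -/
def Lam (f : ℝ → ℂ) : ℝ := sSup {l : ℝ | ∀ᵐ t : ℝ, t < l → f t = 0}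

/-- `Γ(f)`: the upper edge of the support of `f`. -/
def Gam (f : ℝ → ℂ) : ℝ := sInf {l : ℝ | ∀ᵐ t : ℝ, l < t → f t = 0}

/-- Convolution of two functions on `ℝ`. -/
def conv (f g : ℝ → ℂ) (t : ℝ) : ℂ := ∫ s : ℝ, f (t - s) * g s

/-- `(δₙ)` is a weak delta sequence. -/
def WeakDelta (δ : ℕ → ℝ → ℂ) : Prop :=
  (∀ n, Integrable (δ n)) ∧
  (∃ α : ℝ, 0 < α ∧ ∀ n, suppIn (δ n) (Icc (-α) α)) ∧
  Tendsto (fun n => ∫ t : ℝ, δ n t) atTop (nhds 1) ∧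
  (∃ M : ℝ, ∀ n, (∫ t : ℝ, ‖δ n t‖) ≤ M) ∧
  (∀ ε : ℝ, 0 < ε → Tendsto (fun n => ∫ t in {t : ℝ | ε < |t|}, ‖δ n t‖) atTop (nhds 0))

end

lemma norm_exp_le_aux (c : ℂ) (a b x : ℝ) (hx : x ∈ Icc a b) :
    ‖Complex.exp (Complex.I * c * x)‖ ≤ Real.exp (|c.im| * (|a| + |b|)) := by
  rw [Complex.norm_exp, Real.exp_le_exp]
  have h2 : (Complex.I * c * (x : ℂ)).re = -c.im * x := by
    simp [Complex.mul_re, Complex.mul_im]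
  rw [h2]
  have hsle : |x| ≤ |a| + |b| := by
    rcases hx with ⟨h3, h4⟩
    rw [abs_le]; constructor <;> nlinarith [abs_nonneg a, abs_nonneg b, le_abs_self a,
      le_abs_self b, neg_abs_le a, neg_abs_le b]
  calc -c.im * x ≤ |(-c.im) * x| := le_abs_self _
    _ = |c.im| * |x| := by rw [abs_mul, abs_neg]
    _ ≤ |c.im| * (|a| + |b|) := mul_le_mul_of_nonneg_left hsle (abs_nonneg _)

lemma exp_mul_integrable_aux (φ : ℝ → ℂ) (hφi : Integrable φ) (a b : ℝ)
    (hφs : ∀ t ∉ Icc a b, φ t = 0) (c : ℂ) :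
    Integrable (fun s : ℝ => Complex.exp (Complex.I * c * s) * φ s) := by
  have hm : AEStronglyMeasurable (fun s : ℝ => Complex.exp (Complex.I * c * s) * φ s) volume :=
    ((Continuous.aestronglyMeasurable (by continuity)).mul hφi.1)
  set C := Real.exp (|c.im| * (|a| + |b|)) with hC
  refine (hφi.norm.const_mul C).mono' hm ?_
  refine Eventually.of_forall fun s => ?_
  by_cases hs : s ∈ Icc a b
  · calc ‖Complex.exp (Complex.I * c * s) * φ s‖
        = ‖Complex.exp (Complex.I * c * s)‖ * ‖φ s‖ := norm_mul _ _
      _ ≤ C * ‖φ s‖ :=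
          mul_le_mul_of_nonneg_right (norm_exp_le_aux c a b s hs) (norm_nonneg _)
  · rw [hφs s hs]
    simp [hC]

open MeasureTheory Complex Filter Set in
/-- Division of the Fourier transform by a simple zero: if `φ̂(z₀) = 0` then
`ψ(t) = -i e^{-iz₀t} ∫_{-∞}^t e^{iz₀s} φ(s) ds` is integrable, supported in `[a,b]`,
and `ψ̂(z) = φ̂(z)/(z - z₀)` for `z ≠ z₀`. -/
theorem fourier_div_simple_zero (φ : ℝ → ℂ) (hφi : Integrable φ) (a b : ℝ)
    (hφs : ∀ t ∉ Icc a b, φ t = 0) (z₀ : ℂ) (hz₀ : FT φ z₀ = 0) :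
    Integrable (fun t : ℝ =>
        -Complex.I * Complex.exp (-Complex.I * z₀ * t) *
          ∫ s in Iic t, Complex.exp (Complex.I * z₀ * s) * φ s) ∧
    (∀ t ∉ Icc a b,
        -Complex.I * Complex.exp (-Complex.I * z₀ * (t : ℂ)) *
          (∫ s in Iic t, Complex.exp (Complex.I * z₀ * s) * φ s) = 0) ∧
    (∀ z : ℂ, z ≠ z₀ →
        FT (fun t : ℝ =>
          -Complex.I * Complex.exp (-Complex.I * z₀ * t) *
            ∫ s in Iic t, Complex.exp (Complex.I * z₀ * s) * φ s) z
          = FT φ z / (z - z₀)) := by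
  set g : ℝ → ℂ := fun s => Complex.exp (Complex.I * z₀ * s) * φ s with hgdef
  have hg : Integrable g := exp_mul_integrable_aux φ hφi a b hφs z₀
  have hg0 : ∀ s, s ∉ Icc a b → g s = 0 := fun s hs => by
    simp [hgdef, hφs s hs]
  have hgint0 : ∫ s, g s = 0 := hz₀
  set F : ℝ → ℂ := fun t => ∫ s in Iic t, g s with hFdef
  set ψ : ℝ → ℂ := fun t =>
    -Complex.I * Complex.exp (-Complex.I * z₀ * t) * F t with hψdef
  have hFa : ∀ t, t < a → F t = 0 := by
    intro t ht
    refine setIntegral_eq_zero_of_forall_eq_zero fun s hs => hg0 s fun hmem => ?_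
    exact absurd (le_trans hmem.1 (mem_Iic.1 hs)) (not_le.2 ht)
  have hFb : ∀ t, b < t → F t = 0 := by
    intro t ht
    have : F t = ∫ s, g s :=
      setIntegral_eq_integral_of_forall_compl_eq_zero fun s hs =>
        hg0 s fun hmem => hs (mem_Iic.2 (le_trans hmem.2 ht.le))
    rw [this, hgint0]
  have hψ0 : ∀ t ∉ Icc a b, ψ t = 0 := by
    intro t ht
    rcases not_and_or.1 (fun h => ht (mem_Icc.2 h)) with h | h
    · rw [hψdef]; simp only; rw [hFa t (not_le.1 h), mul_zero]
    · rw [hψdef]; simp only; rw [hFb t (not_le.1 h), mul_zero]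
  -- continuity of F and ψ
  have hFc : Continuous F := by
    have h1 : ∀ t, F t = (∫ s in Iic (0:ℝ), g s) + ∫ s in (0:ℝ)..t, g s := by
      intro t
      rw [← intervalIntegral.integral_Iic_sub_Iic (hg.integrableOn) (hg.integrableOn)]
      ring
    rw [show F = fun t => (∫ s in Iic (0:ℝ), g s) + ∫ s in (0:ℝ)..t, g s from funext h1]
    exact continuous_const.add (intervalIntegral.continuous_primitive
      (fun a b => hg.intervalIntegrable) 0)
  have hψc : Continuous ψ :=
    (continuous_const.mul (Complex.continuous_exp.comp
      (continuous_const.mul Complex.continuous_ofReal))).mul hFc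
  -- integrability of ψ
  have hψi : Integrable ψ := by
    set C' : ℝ := Real.exp (|z₀.im| * (|a| + |b|)) * ∫ s, ‖g s‖ with hC'
    have hbound : Integrable ((Icc a b).indicator fun _ => C') :=
      (integrable_indicator_iff measurableSet_Icc).2
        (integrableOn_const measure_Icc_lt_top.ne)
    refine hbound.mono' hψc.aestronglyMeasurable (Eventually.of_forall fun t => ?_)
    by_cases ht : t ∈ Icc a b
    · rw [indicator_of_mem ht]
      have hexp : ‖Complex.exp (-Complex.I * z₀ * (t:ℂ))‖
          ≤ Real.exp (|z₀.im| * (|a| + |b|)) := by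
        have := norm_exp_le_aux (-z₀) a b t ht
        rw [show Complex.I * (-z₀) * (t:ℂ) = -Complex.I * z₀ * t by ring] at this
        rwa [show |(-z₀).im| = |z₀.im| by simp] at this
      have h4 : ‖F t‖ ≤ ∫ s, ‖g s‖ := by
        refine le_trans (norm_integral_le_integral_norm _) ?_
        exact setIntegral_le_integral hg.norm (Eventually.of_forall fun s => norm_nonneg _)
      have hnn : (0:ℝ) ≤ ∫ s, ‖g s‖ := integral_nonneg fun s => norm_nonneg _
      calc ‖ψ t‖ = ‖-Complex.I‖ * ‖Complex.exp (-Complex.I * z₀ * (t:ℂ))‖ * ‖F t‖ := by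
            rw [hψdef]; simp only; rw [norm_mul, norm_mul]
        _ = ‖Complex.exp (-Complex.I * z₀ * (t:ℂ))‖ * ‖F t‖ := by simp
        _ ≤ Real.exp (|z₀.im| * (|a| + |b|)) * ∫ s, ‖g s‖ :=
            mul_le_mul hexp h4 (norm_nonneg _) (Real.exp_pos _).le
        _ = C' := by rw [hC']
    · rw [indicator_of_notMem ht, hψ0 t ht]
      simp
  refine ⟨hψi, fun t ht => hψ0 t ht, fun z hz => ?_⟩
  -- the Fourier transform identity
  set w : ℂ := z - z₀ with hw
  have hwne : w ≠ 0 := sub_ne_zero.2 hz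
  set K : ℝ × ℝ → ℂ := fun p =>
    if p.2 ≤ p.1 ∧ p.1 ≤ b then Complex.exp (Complex.I * w * p.1) * g p.2 else 0 with hKdef
  have hKmeas : AEStronglyMeasurable K (volume.prod volume) := by
    have hS : MeasurableSet {p : ℝ × ℝ | p.2 ≤ p.1 ∧ p.1 ≤ b} :=
      (measurableSet_le measurable_snd measurable_fst).inter
        (measurableSet_le measurable_fst measurable_const)
    have hbase : AEStronglyMeasurable
        (fun p : ℝ × ℝ => Complex.exp (Complex.I * w * p.1) * g p.2) (volume.prod volume) := by
      exact ((Continuous.comp (Complex.continuous_exp.comp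
        (continuous_const.mul Complex.continuous_ofReal)) continuous_fst).aestronglyMeasurable).mul hg.1.comp_snd
    have : K = {p : ℝ × ℝ | p.2 ≤ p.1 ∧ p.1 ≤ b}.indicator
        (fun p => Complex.exp (Complex.I * w * p.1) * g p.2) := by
      funext p; by_cases hp : p.2 ≤ p.1 ∧ p.1 ≤ b <;> simp [hKdef, hp, indicator]
    rw [this]
    exact hbase.indicator hS
  have hKint : Integrable K (volume.prod volume) := by
    set C₂ : ℝ := Real.exp (|w.im| * (|a| + |b|)) with hC₂
    have hB : Integrable (fun p : ℝ × ℝ =>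
        ((Icc a b).indicator fun _ => C₂) p.1 * ‖g p.2‖) (volume.prod volume) :=
      Integrable.mul_prod ((integrable_indicator_iff measurableSet_Icc).2
        (integrableOn_const measure_Icc_lt_top.ne)) hg.norm
    refine hB.mono' hKmeas (Eventually.of_forall fun p => ?_)
    have hBnn : 0 ≤ ((Icc a b).indicator fun _ => C₂) p.1 * ‖g p.2‖ := by
      apply mul_nonneg _ (norm_nonneg _)
      exact indicator_nonneg (fun _ _ => (Real.exp_pos _).le) _
    by_cases hp : p.2 ≤ p.1 ∧ p.1 ≤ b
    · have hKp : K p = Complex.exp (Complex.I * w * p.1) * g p.2 := by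
        rw [hKdef]; exact if_pos hp
      by_cases hgz : g p.2 = 0
      · rw [hKp, hgz, mul_zero, norm_zero]
        exact mul_nonneg (indicator_nonneg (fun _ _ => (Real.exp_pos _).le) _) le_rfl
      · have hs2 : p.2 ∈ Icc a b := by
          by_contra hc; exact hgz (hg0 _ hc)
        have hp1 : p.1 ∈ Icc a b := mem_Icc.2 ⟨le_trans hs2.1 hp.1, hp.2⟩
        calc ‖K p‖ = ‖Complex.exp (Complex.I * w * p.1)‖ * ‖g p.2‖ := by
              rw [hKp]; exact norm_mul _ _
          _ ≤ C₂ * ‖g p.2‖ :=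
              mul_le_mul_of_nonneg_right (norm_exp_le_aux w a b p.1 hp1) (norm_nonneg _)
          _ = ((Icc a b).indicator fun _ => C₂) p.1 * ‖g p.2‖ := by
              rw [indicator_of_mem hp1]
    · have hKp : K p = 0 := by rw [hKdef]; exact if_neg hp
      rw [hKp, norm_zero]; exact hBnn
  -- pointwise identity: e^{izt} ψ t = -I * ∫ s, K (t,s)
  have hKleft : ∀ t : ℝ, Complex.exp (Complex.I * z * t) * ψ t
      = -Complex.I * ∫ s, K (t, s) := by
    intro t
    have hexp : Complex.exp (Complex.I * z * t) * ψ t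
        = -Complex.I * (Complex.exp (Complex.I * w * t) * F t) := by
      rw [hψdef]; simp only
      rw [show Complex.I * w * (t:ℂ)
          = Complex.I * z * t + -Complex.I * z₀ * t by rw [hw]; ring]
      rw [Complex.exp_add]
      ring
    rw [hexp]
    by_cases ht : t ≤ b
    · congr 1
      have h1 : ∀ s : ℝ, K (t, s) = (Iic t).indicator
          (fun s => Complex.exp (Complex.I * w * t) * g s) s := by
        intro s
        rw [hKdef]; by_cases hst : s ≤ t
        · simp [hst, ht, indicator]
        · simp [hst, indicator]
      rw [show (fun s : ℝ => K (t, s)) = (Iic t).indicator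
          (fun s => Complex.exp (Complex.I * w * t) * g s) from funext h1,
        integral_indicator measurableSet_Iic, integral_const_mul]
    · rw [hFb t (not_le.1 ht), mul_zero, mul_zero]
      have h1 : ∀ s : ℝ, K (t, s) = 0 := by
        intro s; rw [hKdef]
        simp only
        rw [if_neg (fun h => ht h.2)]
      rw [show (fun s : ℝ => K (t, s)) = fun _ => (0:ℂ) from funext h1, integral_zero, mul_zero]
  -- inner integral computation
  have hinner : ∀ s : ℝ, (∫ t, K (t, s))
      = g s * ((Complex.exp (Complex.I * w * b) - Complex.exp (Complex.I * w * s))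
          / (Complex.I * w)) := by
    intro s
    have hIw : Complex.I * w ≠ 0 := mul_ne_zero Complex.I_ne_zero hwne
    by_cases hsb : s ≤ b
    · have h1 : ∀ t : ℝ, K (t, s) = (Icc s b).indicator
          (fun t : ℝ => Complex.exp (Complex.I * w * t) * g s) t := by
        intro t
        rw [hKdef]; by_cases hst : s ≤ t ∧ t ≤ b
        · simp [hst, indicator, mem_Icc, hst.1, hst.2]
        · simp only [hst, if_false]
          rw [indicator_of_notMem (fun hc => hst ⟨hc.1, hc.2⟩)]
      rw [show (fun t : ℝ => K (t, s)) = (Icc s b).indicator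
          (fun t : ℝ => Complex.exp (Complex.I * w * t) * g s) from funext h1,
        integral_indicator measurableSet_Icc]
      rw [setIntegral_congr_set Ioc_ae_eq_Icc.symm]
      rw [← intervalIntegral.integral_of_le hsb]
      rw [intervalIntegral.integral_mul_const]
      rw [show (fun t : ℝ => Complex.exp (Complex.I * w * t))
          = fun t : ℝ => Complex.exp ((Complex.I * w) * t) from rfl]
      rw [integral_exp_mul_complex hIw]
      ring
    · have hgz : g s = 0 := hg0 s (fun hc => hsb hc.2)
      have h1 : ∀ t : ℝ, K (t, s) = 0 := by
        intro t; rw [hKdef]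
        simp only
        by_cases hst : s ≤ t ∧ t ≤ b
        · rw [if_pos hst, hgz, mul_zero]
        · rw [if_neg hst]
      rw [show (fun t : ℝ => K (t, s)) = fun _ => (0:ℂ) from funext h1, integral_zero, hgz,
        zero_mul]
  -- put it together
  have hswap : FT ψ z = -Complex.I * ∫ s : ℝ, ∫ t : ℝ, K (t, s) := by
    have h1 : FT ψ z = ∫ t : ℝ, Complex.exp (Complex.I * z * t) * ψ t := rfl
    rw [h1]
    rw [show (fun t : ℝ => Complex.exp (Complex.I * z * t) * ψ t)
        = fun t : ℝ => -Complex.I * ∫ s : ℝ, K (t, s) from funext hKleft]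
    rw [integral_const_mul]
    congr 1
    exact integral_integral_swap hKint
  rw [hswap]
  rw [show (fun s : ℝ => ∫ t : ℝ, K (t, s)) = fun s : ℝ =>
      g s * ((Complex.exp (Complex.I * w * b) - Complex.exp (Complex.I * w * s))
        / (Complex.I * w)) from funext hinner]
  have hg2 : Integrable (fun s : ℝ => Complex.exp (Complex.I * z * s) * φ s) :=
    exp_mul_integrable_aux φ hφi a b hφs z
  have hsplit : ∀ s : ℝ,
      g s * ((Complex.exp (Complex.I * w * b) - Complex.exp (Complex.I * w * s))
        / (Complex.I * w))
      = (Complex.exp (Complex.I * w * b) / (Complex.I * w)) * g s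
        - (1 / (Complex.I * w)) * (Complex.exp (Complex.I * z * s) * φ s) := by
    intro s
    have hgs : Complex.exp (Complex.I * w * s) * g s
        = Complex.exp (Complex.I * z * s) * φ s := by
      rw [hgdef]; simp only
      rw [← mul_assoc, ← Complex.exp_add]
      congr 2
      rw [hw]; ring
    rw [← hgs]
    field_simp
  rw [show (fun s : ℝ =>
      g s * ((Complex.exp (Complex.I * w * b) - Complex.exp (Complex.I * w * s))
        / (Complex.I * w))) = fun s : ℝ =>
      (Complex.exp (Complex.I * w * b) / (Complex.I * w)) * g s
        - (1 / (Complex.I * w)) * (Complex.exp (Complex.I * z * s) * φ s)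
    from funext hsplit]
  rw [integral_sub (hg.const_mul _) (hg2.const_mul _), integral_const_mul, integral_const_mul,
    hgint0, mul_zero, zero_sub]
  have hFTz : (∫ s : ℝ, Complex.exp (Complex.I * z * s) * φ s) = FT φ z := rfl
  rw [hFTz]
  have hz' : z - z₀ ≠ 0 := sub_ne_zero.2 hz
  rw [hw]
  field_simp
end

section
/- Let φ be an integrable function supported in [a,b], z₀ ∈ ℂ, and k ≥ 1, and suppose the derivatives φ̂^{(j)}(z₀) = 0 for j = 0,1,…,k-1. Then there exists an integrable function ψ supported in [a,b] such that ψ̂(z) = φ̂(z)/(z - z₀)^k for all z ≠ z₀. -/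
open MeasureTheory Complex Filter Set Topology

noncomputable section

/-- moments at z₀ -/
def Mz (z₀ : ℂ) (f : ℝ → ℂ) (j : ℕ) : ℂ :=
  ∫ t : ℝ, (t : ℂ) ^ j * Complex.exp (I * z₀ * t) * f t

lemma FD.aux_int {f : ℝ → ℂ} {a b : ℝ} (hfi : Integrable f)
    (hfs : ∀ t ∉ Icc a b, f t = 0) {c : ℝ → ℂ} (hc : Continuous c) :
    Integrable fun t => c t * f t := by
  obtain ⟨C, hC⟩ := (isCompact_Icc (a := a) (b := b)).exists_bound_of_continuousOn
    hc.continuousOn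
  refine (hfi.norm.const_mul C).mono' (hc.aestronglyMeasurable.mul hfi.1) ?_
  refine Eventually.of_forall fun t => ?_
  by_cases ht : t ∈ Icc a b
  · rw [norm_mul]
    exact mul_le_mul_of_nonneg_right (hC t ht) (norm_nonneg _)
  · rw [hfs t ht]; simp

end
open MeasureTheory Complex Filter Set in
lemma FD.hasDerivAt_FT {f : ℝ → ℂ} {a b : ℝ} (hfi : Integrable f)
    (hfs : ∀ t ∉ Icc a b, f t = 0) (z : ℂ) :
    HasDerivAt (FT f) (∫ t : ℝ, (I * t) * Complex.exp (I * z * t) * f t) z := by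
  set A := |a| + |b| with hA
  have hA0 : 0 ≤ A := by positivity
  have hAt : ∀ t ∈ Icc a b, |t| ≤ A := by
    intro t ht
    rcases mem_Icc.mp ht with ⟨h1, h2⟩
    rw [abs_le]
    constructor
    · nlinarith [neg_abs_le a, le_abs_self b, abs_nonneg b]
    · nlinarith [le_abs_self b, abs_nonneg a]
  set C := (1 + A) * Real.exp ((‖z‖ + 1) * A) with hCdef
  have hC0 : 0 ≤ C := by positivity
  have key := hasDerivAt_integral_of_dominated_loc_of_deriv_le
    (F := fun w t => Complex.exp (I * w * t) * f t)
    (F' := fun w t => (I * t) * Complex.exp (I * w * t) * f t) (x₀ := z)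
    (bound := fun t => C * ‖f t‖) (s := Metric.ball z 1) (Metric.ball_mem_nhds z one_pos)
    (Eventually.of_forall fun w =>
      ((Continuous.cexp (by fun_prop)).aestronglyMeasurable.mul hfi.1))
    (FD.aux_int hfi hfs (Continuous.cexp (by fun_prop)))
    ((Continuous.mul (by fun_prop) (Continuous.cexp (by fun_prop))).aestronglyMeasurable.mul
      hfi.1)
    (Eventually.of_forall fun t => ?_) ((hfi.norm.const_mul C))
    (Eventually.of_forall fun t => fun w _ => ?_)
  · exact key.2
  · -- bound
    intro w hw
    by_cases ht : t ∈ Icc a b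
    · have hwz : ‖w‖ ≤ ‖z‖ + 1 := by
        have := mem_ball_iff_norm.mp hw
        have h2 : ‖w‖ ≤ ‖z‖ + ‖w - z‖ := by
          calc ‖w‖ = ‖z + (w - z)‖ := by ring_nf
          _ ≤ ‖z‖ + ‖w - z‖ := norm_add_le _ _
        linarith
      have hre : (I * w * (t : ℂ)).re = -(w.im * t) := by
        simp [Complex.mul_re, Complex.mul_im]
      have hexp : ‖Complex.exp (I * w * t)‖ ≤ Real.exp ((‖z‖ + 1) * A) := by
        rw [Complex.norm_exp, hre]
        apply Real.exp_le_exp.mpr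
        calc -(w.im * t) ≤ |w.im * t| := neg_le_abs _
        _ = |w.im| * |t| := abs_mul _ _
        _ ≤ (‖z‖ + 1) * A := by
            apply mul_le_mul _ (hAt t ht) (abs_nonneg t) (by positivity)
            exact le_trans (Complex.abs_im_le_norm w) hwz
      rw [norm_mul, norm_mul]
      apply mul_le_mul_of_nonneg_right _ (norm_nonneg _)
      have hIt : ‖I * (t : ℂ)‖ = |t| := by
        rw [norm_mul, Complex.norm_I, Complex.norm_real, Real.norm_eq_abs, one_mul]
      rw [hIt]
      calc |t| * ‖Complex.exp (I * w * t)‖ ≤ (1 + A) * Real.exp ((‖z‖ + 1) * A) := by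
            apply mul_le_mul _ hexp (norm_nonneg _) (by positivity)
            linarith [hAt t ht]
      _ = C := rfl
    · rw [hfs t ht]
      simp
  · -- differentiability
    have d1 : HasDerivAt (fun w : ℂ => I * w * (t : ℂ)) (I * (t : ℂ)) w := by
      simpa using ((hasDerivAt_id w).const_mul I).mul_const (t : ℂ)
    have d2 := (d1.cexp).mul_const (f t)
    convert d2 using 1
    · rfl
    · ring

open MeasureTheory Complex Filter Set in
lemma FD.iteratedDeriv_FT {f : ℝ → ℂ} {a b : ℝ} (hfi : Integrable f)
    (hfs : ∀ t ∉ Icc a b, f t = 0) (j : ℕ) (z : ℂ) :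
    iteratedDeriv j (FT f) z = ∫ t : ℝ, (I * t) ^ j * Complex.exp (I * z * t) * f t := by
  induction j generalizing z with
  | zero => simp [iteratedDeriv_zero, FT]
  | succ j ih =>
    set g : ℝ → ℂ := fun t => (I * t) ^ j * f t with hg
    have hgi : Integrable g := FD.aux_int hfi hfs (by fun_prop)
    have hgs : ∀ t ∉ Icc a b, g t = 0 := fun t ht => by simp [g, hfs t ht]
    have hFTg : iteratedDeriv j (FT f) = FT g := by
      funext w
      rw [ih w, FT]
      exact integral_congr_ae (Eventually.of_forall fun t => by simp only [g]; ring)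
    rw [iteratedDeriv_succ, hFTg, (FD.hasDerivAt_FT hgi hgs z).deriv]
    exact integral_congr_ae (Eventually.of_forall fun t => by simp only [g]; ring)
open MeasureTheory Complex Filter Set in
lemma FD.div_step {f : ℝ → ℂ} {a b : ℝ} (hab : a ≤ b) (hfi : Integrable f)
    (hfs : ∀ t ∉ Icc a b, f t = 0) (z₀ : ℂ) (h0 : FT f z₀ = 0) :
    ∃ ψ : ℝ → ℂ, Integrable ψ ∧ (∀ t ∉ Icc a b, ψ t = 0) ∧
      (∀ z : ℂ, z ≠ z₀ → FT ψ z = FT f z / (z - z₀)) ∧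
      (∀ j : ℕ, Mz z₀ ψ j =
        (-I / ((j : ℂ) + 1)) * ((b : ℂ) ^ (j + 1) * Mz z₀ f 0 - Mz z₀ f (j + 1))) := by
  classical
  set h : ℝ → ℂ := fun u => Complex.exp (I * z₀ * u) * f u with hh
  have hh_int : Integrable h := FD.aux_int hfi hfs (by fun_prop)
  have hh_supp : ∀ u ∉ Icc a b, h u = 0 := fun u hu => by
    simp only [hh]; rw [hfs u hu, mul_zero]
  have hIntH : (∫ u : ℝ, h u) = 0 := h0
  set G : ℝ → ℂ := fun t => ∫ u in a..t, h u with hG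
  have hGcont : Continuous G :=
    intervalIntegral.continuous_primitive (fun c d => hh_int.intervalIntegrable) a
  have hae : ∀ᵐ u : ℝ, u ≠ a := by
    have hset : ({a} : Set ℝ) = {u | ¬ u ≠ a} := by ext; simp
    rw [ae_iff, ← hset]
    exact measure_singleton a
  have hGhigh : ∀ t, b < t → G t = 0 := by
    intro t htb
    have h1 : G t = ∫ u in Ioc a t, h u := by
      simp only [hG]
      rw [intervalIntegral.integral_of_le (le_trans hab (le_of_lt htb))]
    rw [h1, setIntegral_eq_integral_of_ae_compl_eq_zero, hIntH]
    filter_upwards [hae] with u hu hnotin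
    by_cases hua : u ≤ a
    · exact hh_supp u fun hm => absurd (mem_Icc.mp hm).1 (not_le.mpr (lt_of_le_of_ne hua hu))
    · have : t < u := by
        by_contra hc
        exact hnotin ⟨not_le.mp hua, not_lt.mp hc⟩
      exact hh_supp u fun hm => absurd (mem_Icc.mp hm).2 (not_le.mpr (lt_of_lt_of_le htb this.le))
  have hGlow : ∀ t, t < a → G t = 0 := by
    intro t hta
    have h1 : G t = -∫ u in Ioc t a, h u := by
      simp only [hG]
      rw [intervalIntegral.integral_symm, intervalIntegral.integral_of_le hta.le]
    rw [h1, integral_Ioc_eq_integral_Ioo,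
      setIntegral_congr_fun measurableSet_Ioo
        (fun u hu => hh_supp u fun hm => absurd (mem_Icc.mp hm).1 (not_le.mpr hu.2))]
    simp
  set ψ : ℝ → ℂ := fun t => -I * Complex.exp (-(I * z₀ * t)) * G t with hψ
  have hψs : ∀ t ∉ Icc a b, ψ t = 0 := by
    intro t ht
    simp only [hψ]
    rcases not_and_or.mp (mem_Icc.mp.mt ht) with h1 | h1
    · rw [hGlow t (not_le.mp h1), mul_zero]
    · rw [hGhigh t (not_le.mp h1), mul_zero]
  have hψcont : Continuous ψ := by
    apply (continuous_const.mul (Continuous.cexp (by fun_prop))).mul hGcont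
  have hψint : Integrable ψ :=
    hψcont.integrable_of_hasCompactSupport (HasCompactSupport.intro isCompact_Icc hψs)
  -- the core Fubini identity
  have core : ∀ w : ℝ → ℂ, Continuous w →
      (∫ t : ℝ, w t * ψ t) = ∫ u in Icc a b,
        (∫ t in Icc u b, -I * w t * Complex.exp (-(I * z₀ * t))) * h u := by
    intro w hw
    set c : ℝ → ℂ := fun t => -I * w t * Complex.exp (-(I * z₀ * t)) with hc
    have hccont : Continuous c := by fun_prop
    set K : ℝ × ℝ → ℂ :=
      fun p => ({q : ℝ × ℝ | q.2 ≤ q.1}).indicator (fun q => c q.1 * h q.2) p with hK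
    have hS : MeasurableSet {q : ℝ × ℝ | q.2 ≤ q.1} :=
      measurableSet_le measurable_snd measurable_fst
    have hKint : Integrable K ((volume.restrict (Icc a b)).prod (volume.restrict (Icc a b))) :=
      Integrable.indicator (hccont.integrableOn_Icc.mul_prod hh_int.integrableOn) hS
    have step1 : (∫ t : ℝ, w t * ψ t) = ∫ t in Icc a b, w t * ψ t :=
      (setIntegral_eq_integral_of_forall_compl_eq_zero
        (fun t ht => by rw [hψs t ht, mul_zero])).symm
    have step2 : (∫ t in Icc a b, w t * ψ t) = ∫ t in Icc a b, ∫ u in Icc a b, K (t, u) := by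
      refine setIntegral_congr_fun measurableSet_Icc fun t ht => ?_
      have h1 : (fun u => K (t, u)) = fun u => (Iic t).indicator (fun u => c t * h u) u := by
        funext u
        simp [hK, Set.indicator_apply, Set.mem_setOf_eq, Set.mem_Iic]
      rw [h1, setIntegral_indicator measurableSet_Iic]
      have hset : Icc a b ∩ Iic t = Icc a t := by
        rcases mem_Icc.mp ht with ⟨h1', h2'⟩
        ext u
        simp only [mem_inter_iff, mem_Icc, mem_Iic]
        constructor
        · rintro ⟨⟨g1, g2⟩, g3⟩; exact ⟨g1, g3⟩
        · rintro ⟨g1, g3⟩; exact ⟨⟨g1, le_trans g3 h2'⟩, g3⟩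
      rw [hset, integral_const_mul]
      have hGt : G t = ∫ u in Icc a t, h u := by
        simp only [hG]
        rw [intervalIntegral.integral_of_le (mem_Icc.mp ht).1, ← integral_Icc_eq_integral_Ioc]
      rw [← hGt]
      simp only [hψ, hc]
      ring
    have step3 : (∫ t in Icc a b, ∫ u in Icc a b, K (t, u))
        = ∫ u in Icc a b, ∫ t in Icc a b, K (t, u) := integral_integral_swap hKint
    have step4 : (∫ u in Icc a b, ∫ t in Icc a b, K (t, u))
        = ∫ u in Icc a b, (∫ t in Icc u b, c t) * h u := by
      refine setIntegral_congr_fun measurableSet_Icc fun u hu => ?_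
      have h1 : (fun t => K (t, u)) = fun t => (Ici u).indicator (fun t => c t * h u) t := by
        funext t
        simp [hK, Set.indicator_apply, Set.mem_setOf_eq, Set.mem_Ici]
      rw [h1, setIntegral_indicator measurableSet_Ici]
      have hset : Icc a b ∩ Ici u = Icc u b := by
        rcases mem_Icc.mp hu with ⟨h1', h2'⟩
        ext t
        simp only [mem_inter_iff, mem_Icc, mem_Ici]
        constructor
        · rintro ⟨⟨g1, g2⟩, g3⟩; exact ⟨g3, g2⟩
        · rintro ⟨g3, g2⟩; exact ⟨⟨le_trans h1' g3, g2⟩, g3⟩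
      rw [hset, integral_mul_const]
    rw [step1, step2, step3, step4]
  refine ⟨ψ, hψint, hψs, ?_, ?_⟩
  · -- Fourier transform identity
    intro z hz
    have hD : I * (z - z₀) ≠ 0 := mul_ne_zero I_ne_zero (sub_ne_zero.mpr hz)
    have hcore := core (fun t => Complex.exp (I * z * t)) (by fun_prop)
    have hFT : FT ψ z = ∫ t : ℝ, Complex.exp (I * z * t) * ψ t := rfl
    rw [hFT, hcore]
    have hinner : ∀ u ∈ Icc a b,
        (∫ t in Icc u b, -I * Complex.exp (I * z * t) * Complex.exp (-(I * z₀ * t))) * h u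
        = (-I / (I * (z - z₀))) * ((Complex.exp (I * (z - z₀) * b)) * h u
            - Complex.exp (I * (z - z₀) * u) * h u) := by
      intro u hu
      have hub : u ≤ b := (mem_Icc.mp hu).2
      have hptw : ∀ t : ℝ, -I * Complex.exp (I * z * t) * Complex.exp (-(I * z₀ * t))
          = -I * Complex.exp ((I * (z - z₀)) * t) := by
        intro t
        rw [mul_assoc, ← Complex.exp_add]
        congr 2
        ring
      rw [integral_Icc_eq_integral_Ioc, ← intervalIntegral.integral_of_le hub]
      simp only [hptw]
      rw [intervalIntegral.integral_const_mul, integral_exp_mul_complex hD]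
      ring
    rw [setIntegral_congr_fun measurableSet_Icc hinner]
    have heh_int : Integrable fun u : ℝ => Complex.exp (I * (z - z₀) * u) * h u := by
      have := FD.aux_int hfi hfs
        (c := fun u : ℝ => Complex.exp (I * (z - z₀) * u) * Complex.exp (I * z₀ * u))
        (by fun_prop)
      exact this.congr (Eventually.of_forall fun u => by simp only [hh]; ring)
    rw [integral_const_mul]
    rw [integral_sub ((hh_int.const_mul _).integrableOn) heh_int.integrableOn]
    rw [integral_const_mul]
    have hIcc0 : (∫ u in Icc a b, h u) = 0 := by
      rw [setIntegral_eq_integral_of_forall_compl_eq_zero hh_supp, hIntH]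
    have hIccz : (∫ u in Icc a b, Complex.exp (I * (z - z₀) * u) * h u) = FT f z := by
      rw [setIntegral_eq_integral_of_forall_compl_eq_zero
        (fun u hu => by rw [hh_supp u hu, mul_zero])]
      refine integral_congr_ae (Eventually.of_forall fun u => ?_)
      simp only [hh]
      rw [← mul_assoc, ← Complex.exp_add]
      congr 2
      ring
    rw [hIcc0, hIccz, mul_zero, zero_sub]
    rw [div_mul_eq_mul_div, mul_neg, neg_mul, neg_neg]
    rw [mul_div_mul_left _ _ I_ne_zero]
  · -- moment identity
    intro j
    have hcore := core (fun t => (t : ℂ) ^ j * Complex.exp (I * z₀ * t)) (by fun_prop)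
    have hMz : Mz z₀ ψ j = ∫ t : ℝ, ((t : ℂ) ^ j * Complex.exp (I * z₀ * t)) * ψ t := by
      refine integral_congr_ae (Eventually.of_forall fun t => by ring)
    rw [hMz, hcore]
    have hj1 : ((j : ℂ) + 1) ≠ 0 := by
      have h' : ((j + 1 : ℕ) : ℂ) ≠ 0 := Nat.cast_ne_zero.mpr (Nat.succ_ne_zero j)
      push_cast at h'
      exact h'
    have hinner : ∀ u ∈ Icc a b,
        (∫ t in Icc u b, -I * ((t : ℂ) ^ j * Complex.exp (I * z₀ * t))
            * Complex.exp (-(I * z₀ * t))) * h u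
        = (-I / ((j : ℂ) + 1)) * (((b : ℂ) ^ (j + 1)) * h u - ((u : ℂ) ^ (j + 1)) * h u) := by
      intro u hu
      have hub : u ≤ b := (mem_Icc.mp hu).2
      have hptw : ∀ t : ℝ, -I * ((t : ℂ) ^ j * Complex.exp (I * z₀ * t))
          * Complex.exp (-(I * z₀ * t)) = -I * ((((t : ℝ) ^ j : ℝ)) : ℂ) := by
        intro t
        rw [mul_assoc, mul_assoc, ← Complex.exp_add]
        push_cast
        rw [add_neg_cancel, Complex.exp_zero, mul_one]
      rw [integral_Icc_eq_integral_Ioc, ← intervalIntegral.integral_of_le hub]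
      simp only [hptw]
      rw [intervalIntegral.integral_const_mul, intervalIntegral.integral_ofReal, integral_pow]
      push_cast
      ring
    rw [setIntegral_congr_fun measurableSet_Icc hinner]
    have hph_int : Integrable fun u : ℝ => ((u : ℂ) ^ (j + 1)) * h u := by
      have := FD.aux_int hfi hfs
        (c := fun u : ℝ => ((u : ℂ) ^ (j + 1)) * Complex.exp (I * z₀ * u)) (by fun_prop)
      exact this.congr (Eventually.of_forall fun u => by simp only [hh]; ring)
    rw [integral_const_mul,
      integral_sub ((hh_int.const_mul _).integrableOn) hph_int.integrableOn,
      integral_const_mul]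
    have hIcc0 : (∫ u in Icc a b, h u) = Mz z₀ f 0 := by
      rw [setIntegral_eq_integral_of_forall_compl_eq_zero hh_supp]
      refine integral_congr_ae (Eventually.of_forall fun u => by simp [hh])
    have hIcc1 : (∫ u in Icc a b, ((u : ℂ) ^ (j + 1)) * h u) = Mz z₀ f (j + 1) := by
      rw [setIntegral_eq_integral_of_forall_compl_eq_zero
        (fun u hu => by rw [hh_supp u hu, mul_zero])]
      refine integral_congr_ae (Eventually.of_forall fun u => by simp only [hh]; ring)
    rw [hIcc0, hIcc1]
open MeasureTheory Complex Filter Set in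
lemma FD.main (z₀ : ℂ) (a b : ℝ) (hab : a ≤ b) :
    ∀ k : ℕ, ∀ f : ℝ → ℂ, Integrable f → (∀ t ∉ Icc a b, f t = 0) →
      (∀ j < k, Mz z₀ f j = 0) →
      ∃ ψ : ℝ → ℂ, Integrable ψ ∧ (∀ t ∉ Icc a b, ψ t = 0) ∧
        ∀ z : ℂ, z ≠ z₀ → FT ψ z = FT f z / (z - z₀) ^ k := by
  intro k
  induction k with
  | zero =>
    intro f hfi hfs _
    exact ⟨f, hfi, hfs, fun z _ => by simp⟩
  | succ k ih =>
    intro f hfi hfs hM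
    have h0 : FT f z₀ = 0 := by
      have e : FT f z₀ = Mz z₀ f 0 := by
        simp only [FT, Mz]
        exact integral_congr_ae (Eventually.of_forall fun t => by simp)
      rw [e]
      exact hM 0 (Nat.succ_pos k)
    obtain ⟨ψ₁, h1i, h1s, h1ft, h1m⟩ := FD.div_step hab hfi hfs z₀ h0
    have hM1 : ∀ j < k, Mz z₀ ψ₁ j = 0 := by
      intro j hj
      rw [h1m j, hM 0 (Nat.succ_pos k), hM (j + 1) (Nat.succ_lt_succ hj)]
      ring
    obtain ⟨ψ, hi, hs, hft⟩ := ih ψ₁ h1i h1s hM1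
    refine ⟨ψ, hi, hs, fun z hz => ?_⟩
    rw [hft z hz, h1ft z hz, div_div, ← pow_succ']


open MeasureTheory Complex Filter Set in
/-- Division of the Fourier transform by a zero of order `k`: if `φ̂⁽ʲ⁾(z₀) = 0` for
`j = 0, …, k-1`, there is an integrable `ψ` supported in `[a,b]` with
`ψ̂(z) = φ̂(z)/(z - z₀)^k` for `z ≠ z₀`. -/
theorem fourier_div_zero_of_order (φ : ℝ → ℂ) (hφi : Integrable φ) (a b : ℝ)
    (hφs : ∀ t ∉ Icc a b, φ t = 0) (z₀ : ℂ) (k : ℕ) (hk : 1 ≤ k)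
    (hz₀ : ∀ j < k, iteratedDeriv j (FT φ) z₀ = 0) :
    ∃ ψ : ℝ → ℂ, Integrable ψ ∧ (∀ t ∉ Icc a b, ψ t = 0) ∧
      ∀ z : ℂ, z ≠ z₀ → FT ψ z = FT φ z / (z - z₀) ^ k := by
  by_cases hab : a ≤ b
  · have hMφ : ∀ j < k, Mz z₀ φ j = 0 := by
      intro j hj
      have h1 := FD.iteratedDeriv_FT hφi hφs j z₀
      rw [hz₀ j hj] at h1
      have h2 : (∫ t : ℝ, (I * (t : ℂ)) ^ j * Complex.exp (I * z₀ * t) * φ t)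
          = I ^ j * Mz z₀ φ j := by
        rw [Mz, ← integral_const_mul]
        exact integral_congr_ae (Eventually.of_forall fun t => by simp only []; rw [mul_pow]; ring)
      rw [h2] at h1
      rcases mul_eq_zero.mp h1.symm with h | h
      · exact absurd h (pow_ne_zero j I_ne_zero)
      · exact h
    exact FD.main z₀ a b hab k φ hφi hφs hMφ
  · have hz : ∀ t, φ t = 0 := fun t => hφs t fun hm =>
      hab (le_trans (mem_Icc.mp hm).1 (mem_Icc.mp hm).2)
    refine ⟨fun _ => 0, integrable_zero _ _ _, fun t _ => rfl, fun z _ => ?_⟩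
    have h1 : FT (fun _ => (0 : ℂ)) z = 0 := by simp [FT]
    have h2 : FT φ z = 0 := by simp [FT, hz]
    rw [h1, h2, zero_div]
end

section
/- Let E be a shift-invariant subspace of ℒ. If E is sequentially dense in ℒ, then for every α > 0 there exists β > 0 such that ℒ_α ⊆ cl(E_β), where the closure is taken in the Banach space ℒ_β (L¹ norm). -/
open MeasureTheory Complex Filter Set Topology

noncomputable section AuxProof
open MeasureTheory Complex Filter Set Topology

abbrev XX : Type := Lp ℂ 1 (volume : Measure ℝ)

lemma LL_prop (φ : LL) :
    Integrable (φ : ℝ → ℂ) ∧ ∃ n : ℕ, suppIn (φ : ℝ → ℂ) (Icc (-(n : ℝ)) n) := φ.2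

/-- The canonical linear map from `𝓛` to `L¹(ℝ)`. -/
def Jlin : LL →ₗ[ℂ] XX where
  toFun φ := (LL_prop φ).1.toL1 _
  map_add' φ ψ := Integrable.toL1_add _ _ (LL_prop φ).1 (LL_prop ψ).1
  map_smul' c φ := Integrable.toL1_smul' _ (LL_prop φ).1 c

lemma norm_Jlin (φ : LL) : ‖Jlin φ‖ = ∫ t : ℝ, ‖(φ : ℝ → ℂ) t‖ :=
  L1.norm_of_fun_eq_integral_norm (LL_prop φ).1

lemma coeFn_Jlin (φ : LL) : (Jlin φ : ℝ → ℂ) =ᵐ[volume] (φ : ℝ → ℂ) :=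
  (LL_prop φ).1.coeFn_toL1

lemma dist_Jlin (φ ψ : LL) : dist (Jlin φ) (Jlin ψ) = L1dist φ ψ := by
  rw [dist_eq_norm, ← map_sub, norm_Jlin]
  simp only [L1dist, Submodule.coe_sub, Pi.sub_apply]

lemma L1dist_triangle (φ₀ φ ψ : LL) : L1dist φ₀ ψ ≤ L1dist φ₀ φ + L1dist φ ψ := by
  rw [← dist_Jlin, ← dist_Jlin, ← dist_Jlin]
  exact dist_triangle _ _ _

/-- From a generated-open set we can extract a ball around each of its points. -/
lemma ball_of_genOpen {o : Set LL}
    (ho : TopologicalSpace.GenerateOpen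
      {B | ∃ φ : LL, ∃ ε : ℝ, 0 < ε ∧ B = {ψ | L1dist φ ψ < ε}} o) :
    ∀ φ ∈ o, ∃ ε : ℝ, 0 < ε ∧ {ψ | L1dist φ ψ < ε} ⊆ o := by
  induction ho with
  | basic B hB =>
      rintro φ hφ
      obtain ⟨φ₀, ε₀, hε₀, rfl⟩ := hB
      have hφ' : L1dist φ₀ φ < ε₀ := hφ
      refine ⟨ε₀ - L1dist φ₀ φ, by linarith, fun ψ hψ => ?_⟩
      have := L1dist_triangle φ₀ φ ψ
      have hψ' : L1dist φ ψ < ε₀ - L1dist φ₀ φ := hψ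
      show L1dist φ₀ ψ < ε₀
      linarith
  | univ => exact fun φ _ => ⟨1, one_pos, fun _ _ => trivial⟩
  | inter s t _ _ ihs iht =>
      intro φ hφ
      obtain ⟨ε₁, h1, hb1⟩ := ihs φ hφ.1
      obtain ⟨ε₂, h2, hb2⟩ := iht φ hφ.2
      refine ⟨min ε₁ ε₂, lt_min h1 h2, fun ψ hψ => ?_⟩
      have h : L1dist φ ψ < min ε₁ ε₂ := hψ
      exact ⟨hb1 (h.trans_le (min_le_left _ _)), hb2 (h.trans_le (min_le_right _ _))⟩
  | sUnion S _ ih =>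
      intro φ hφ
      obtain ⟨s, hsS, hφs⟩ := hφ
      obtain ⟨ε, hε, hb⟩ := ih s hsS φ hφs
      exact ⟨ε, hε, fun ψ hψ => ⟨s, hsS, hb hψ⟩⟩

lemma mem_L1closure {S : Set LL} {φ : LL}
    (h : ∀ ε : ℝ, 0 < ε → ∃ ψ ∈ S, L1dist φ ψ < ε) :
    φ ∈ @closure _ L1top S := by
  letI := L1top
  rw [mem_closure_iff]
  intro o ho hφ
  obtain ⟨ε, hε, hb⟩ := ball_of_genOpen ho φ hφ
  obtain ⟨ψ, hψS, hd⟩ := h ε hε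
  exact ⟨ψ, hb hd, hψS⟩

/-- `Lset β` as a submodule of `𝓛`. -/
def LsetSub (β : ℝ) : Submodule ℂ LL where
  carrier := Lset β
  add_mem' := by
    rintro φ ψ hφ hψ
    have hφ' : suppIn (φ : ℝ → ℂ) (Icc (-β) β) := hφ
    have hψ' : suppIn (ψ : ℝ → ℂ) (Icc (-β) β) := hψ
    show suppIn ((φ + ψ : LL) : ℝ → ℂ) (Icc (-β) β)
    filter_upwards [hφ', hψ'] with t h1 h2 ht
    show (φ : ℝ → ℂ) t + (ψ : ℝ → ℂ) t = 0
    rw [h1 ht, h2 ht, add_zero]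
  zero_mem' := by
    show suppIn ((0 : LL) : ℝ → ℂ) (Icc (-β) β)
    exact Filter.Eventually.of_forall fun t _ => rfl
  smul_mem' := by
    rintro c φ hφ
    have hφ' : suppIn (φ : ℝ → ℂ) (Icc (-β) β) := hφ
    show suppIn ((c • φ : LL) : ℝ → ℂ) (Icc (-β) β)
    filter_upwards [hφ'] with t h ht
    show c • (φ : ℝ → ℂ) t = 0
    rw [h ht, smul_zero]

lemma Lset_mono {a b : ℝ} (hab : a ≤ b) : Lset a ⊆ Lset b := by
  intro φ hφ
  have hφ' : suppIn (φ : ℝ → ℂ) (Icc (-a) a) := hφ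
  show suppIn (φ : ℝ → ℂ) (Icc (-b) b)
  filter_upwards [hφ'] with t ht htb
  exact ht fun hmem => htb (Icc_subset_Icc (neg_le_neg hab) hab hmem)

/-- Functions in `L¹(ℝ)` supported a.e. in `[-α, α]`. -/
def Yset (α : ℝ) : Set XX := {f : XX | ∀ᵐ t : ℝ, t ∉ Icc (-α) α → (f : ℝ → ℂ) t = 0}

lemma isClosed_Yset (α : ℝ) : IsClosed (Yset α) := by
  have hs : MeasurableSet ((Icc (-α) α)ᶜ : Set ℝ) := measurableSet_Icc.compl
  have key : Yset α = (fun f : XX => ∫ t in (Icc (-α) α)ᶜ, ‖(f : ℝ → ℂ) t‖) ⁻¹' {0} := by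
    ext f
    simp only [mem_preimage, mem_singleton_iff, Yset, mem_setOf_eq]
    constructor
    · intro h
      have h' : ∀ᵐ t ∂(volume.restrict (Icc (-α) α)ᶜ), (f : ℝ → ℂ) t = 0 := by
        rw [ae_restrict_iff' hs]
        filter_upwards [h] with t ht hts
        exact ht hts
      rw [integral_congr_ae (g := fun _ => (0 : ℝ))
        (by filter_upwards [h'] with t ht; rw [ht]; simp)]
      simp
    · intro h
      have hint : Integrable (fun t => ‖(f : ℝ → ℂ) t‖) (volume.restrict (Icc (-α) α)ᶜ) :=
        ((L1.integrable_coeFn f).restrict).norm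
      have h0 := (integral_eq_zero_iff_of_nonneg_ae
        (ae_of_all _ fun t => norm_nonneg _) hint).mp h
      rw [Filter.EventuallyEq, ae_restrict_iff' hs] at h0
      filter_upwards [h0] with t ht hts
      have := ht hts
      simpa using this
  rw [key]
  refine IsClosed.preimage ?_ isClosed_singleton
  refine LipschitzWith.continuous (K := 1) (LipschitzWith.of_dist_le_mul fun f g => ?_)
  rw [NNReal.coe_one, one_mul]
  have hf := ((L1.integrable_coeFn f).restrict (s := (Icc (-α) α)ᶜ))
  have hg := ((L1.integrable_coeFn g).restrict (s := (Icc (-α) α)ᶜ))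
  have h1 : dist (∫ t in (Icc (-α) α)ᶜ, ‖(f : ℝ → ℂ) t‖)
      (∫ t in (Icc (-α) α)ᶜ, ‖(g : ℝ → ℂ) t‖)
      ≤ ∫ t in (Icc (-α) α)ᶜ, ‖(f : ℝ → ℂ) t - (g : ℝ → ℂ) t‖ := by
    rw [dist_eq_norm, ← integral_sub hf.norm hg.norm]
    refine (norm_integral_le_integral_norm _).trans ?_
    refine integral_mono ((hf.norm).sub (hg.norm)).norm ((hf.sub hg).norm) fun t => ?_
    simpa using abs_norm_sub_norm_le ((f : ℝ → ℂ) t) ((g : ℝ → ℂ) t)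
  have h2 : (∫ t in (Icc (-α) α)ᶜ, ‖(f : ℝ → ℂ) t - (g : ℝ → ℂ) t‖)
      ≤ ∫ t : ℝ, ‖(f : ℝ → ℂ) t - (g : ℝ → ℂ) t‖ :=
    setIntegral_le_integral ((L1.integrable_coeFn f).sub (L1.integrable_coeFn g)).norm
      (ae_of_all _ fun t => norm_nonneg _)
  have h3 : dist f g = ∫ t : ℝ, ‖(f : ℝ → ℂ) t - (g : ℝ → ℂ) t‖ := by
    rw [L1.dist_eq_integral_dist]
    exact integral_congr_ae (Filter.Eventually.of_forall fun t => dist_eq_norm _ _)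
  exact h1.trans (h2.trans (le_of_eq h3.symm))

end AuxProof
open MeasureTheory Complex Filter Set in
/-- Theorem 3, (a) → (b): if a shift-invariant subspace `E` is sequentially dense in
`𝓛`, then for every `α > 0` there is `β > 0` with `𝓛_α ⊆ cl(E_β)`, the closure being
taken in the `L¹` norm. -/
theorem seq_dense_implies_banach_closure (E : Submodule ℂ LL)
    (hE : ShiftInv (E : Set LL)) (hdense : seqCl (E : Set LL) = Set.univ) :
    ∀ α : ℝ, 0 < α → ∃ β : ℝ, 0 < β ∧
      Lset α ⊆ @closure _ L1top ((E : Set LL) ∩ Lset β) := by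
  intro α hα
  -- The closed submodules `C k = closure (Jlin '' (E ∩ Lset k))` of `L¹(ℝ)`.
  set M : ℕ → Submodule ℂ XX := fun k => (E ⊓ LsetSub (k : ℝ)).map Jlin with hM
  set C : ℕ → Submodule ℂ XX := fun k => (M k).topologicalClosure with hC
  have hCclosed : ∀ k, IsClosed (C k : Set XX) := fun k =>
    Submodule.isClosed_topologicalClosure _
  -- The closed subspace `Y` of `L¹(ℝ)` of functions supported in `[-α, α]`.
  have hYclosed : IsClosed (Yset α) := isClosed_Yset α
  -- every element of `Y` lies in some `C k`
  have hcover : ∀ y : XX, y ∈ Yset α → ∃ k : ℕ, y ∈ (C k : Set XX) := by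
    intro y hy
    -- choose a genuine representative of bounded support
    set g : ℝ → ℂ := (Icc (-α) α).indicator (y : ℝ → ℂ) with hg
    have hgint : Integrable g := (L1.integrable_coeFn y).indicator measurableSet_Icc
    have hαn : α ≤ (⌈α⌉₊ : ℝ) := Nat.le_ceil α
    have hgsupp : suppIn g (Icc (-(⌈α⌉₊ : ℝ)) (⌈α⌉₊ : ℝ)) := by
      refine Filter.Eventually.of_forall fun t ht => ?_
      have : t ∉ Icc (-α) α := fun hmem =>
        ht (Icc_subset_Icc (neg_le_neg hαn) hαn hmem)
      exact indicator_of_notMem this _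
    set φg : LL := ⟨g, hgint, ⌈α⌉₊, hgsupp⟩ with hφg
    have hy' : ∀ᵐ t : ℝ, t ∉ Icc (-α) α → (y : ℝ → ℂ) t = 0 := hy
    have hgy : g =ᵐ[volume] (y : ℝ → ℂ) := by
      filter_upwards [hy'] with t ht
      by_cases hmem : t ∈ Icc (-α) α
      · rw [hg]; simp [indicator_of_mem hmem]
      · rw [hg]; simp [indicator_of_notMem hmem, ht hmem]
    have hJy : Jlin φg = y := by
      rw [show Jlin φg = Integrable.toL1 (φg : ℝ → ℂ) (LL_prop φg).1 from rfl]
      rw [(Integrable.toL1_eq_toL1_iff (φg : ℝ → ℂ) ((y : XX) : ℝ → ℂ) (LL_prop φg).1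
        (L1.integrable_coeFn y)).mpr hgy, Integrable.toL1_coeFn]
    -- density gives a sequence from `E` with common support
    have hφgmem : φg ∈ seqCl (E : Set LL) := by rw [hdense]; exact mem_univ _
    obtain ⟨f, hfE, ⟨m, hm⟩, htend⟩ := hφgmem
    refine ⟨m, ?_⟩
    have := Submodule.le_topologicalClosure (M m)
    have hmem : ∀ j, Jlin (f j) ∈ (M m : Set XX) := fun j =>
      ⟨f j, Submodule.mem_inf.mpr ⟨hfE j, hm j⟩, rfl⟩
    have htendJ : Tendsto (fun j => Jlin (f j)) atTop (nhds y) := by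
      rw [tendsto_iff_dist_tendsto_zero]
      have : (fun j => dist (Jlin (f j)) y) = fun j => L1dist (f j) φg := by
        funext j; rw [← hJy, dist_Jlin]
      rw [this]; exact htend
    have : y ∈ closure (M m : Set XX) :=
      mem_closure_of_tendsto htendJ (Filter.Eventually.of_forall hmem)
    rwa [← Submodule.topologicalClosure_coe] at this
  -- Baire category in the closed subspace `Y`
  haveI : CompleteSpace (Yset α) := hYclosed.completeSpace_coe
  haveI : Nonempty (Yset α) := ⟨⟨0, by
    filter_upwards [Lp.coeFn_zero ℂ 1 (volume : Measure ℝ)] with t ht _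
    simpa using ht⟩⟩
  have hBaire : ∃ k : ℕ, (interior (Subtype.val ⁻¹' (C k : Set XX) : Set (Yset α))).Nonempty := by
    apply nonempty_interior_of_iUnion_of_closed
      (fun k => (hCclosed k).preimage continuous_subtype_val)
    apply eq_univ_of_forall
    intro y
    obtain ⟨k, hk⟩ := hcover (y : XX) y.2
    exact mem_iUnion.mpr ⟨k, hk⟩
  obtain ⟨k, y₀, hy₀⟩ := hBaire
  rw [mem_interior_iff_mem_nhds, Metric.mem_nhds_iff] at hy₀
  obtain ⟨ε, hε, hball⟩ := hy₀
  -- conclude `Y ⊆ C k`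
  have hYC : Yset α ⊆ (C k : Set XX) := by
    intro x hx
    have hy₀C : (y₀ : XX) ∈ (C k : Set XX) := hball (Metric.mem_ball_self hε)
    set r : ℝ := ε / (‖x‖ + 1) with hr
    have hrpos : 0 < r := div_pos hε (by positivity)
    set z : ℂ := (r : ℂ) with hz
    have hznz : z ≠ 0 := by
      simp only [hz, ne_eq, Complex.ofReal_eq_zero]
      exact ne_of_gt hrpos
    have hy₀' : ∀ᵐ t : ℝ, t ∉ Icc (-α) α → ((y₀ : XX) : ℝ → ℂ) t = 0 := y₀.2
    have hx' : ∀ᵐ t : ℝ, t ∉ Icc (-α) α → (x : ℝ → ℂ) t = 0 := hx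
    have hy₁Y : (y₀ : XX) + z • x ∈ Yset α := by
      show ∀ᵐ t : ℝ, t ∉ Icc (-α) α → (((y₀ : XX) + z • x : XX) : ℝ → ℂ) t = 0
      filter_upwards [Lp.coeFn_add (y₀ : XX) (z • x), Lp.coeFn_smul z x, hy₀', hx']
        with t h1 h2 h3 h4 ht
      rw [h1, Pi.add_apply, h3 ht, h2, Pi.smul_apply, h4 ht, smul_zero, add_zero]
    have hdist : dist (((y₀ : XX) + z • x : XX)) (y₀ : XX) < ε := by
      rw [dist_eq_norm]
      have : (y₀ : XX) + z • x - (y₀ : XX) = z • x := by abel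
      rw [this, norm_smul]
      have hznorm : ‖z‖ = r := by
        rw [hz, Complex.norm_real, Real.norm_eq_abs, abs_of_pos hrpos]
      rw [hznorm, hr]
      calc ε / (‖x‖ + 1) * ‖x‖ < ε / (‖x‖ + 1) * (‖x‖ + 1) := by
            apply mul_lt_mul_of_pos_left (by linarith) hrpos
        _ = ε := by field_simp
    have hy₁C : (y₀ : XX) + z • x ∈ (C k : Set XX) := by
      have : (⟨(y₀ : XX) + z • x, hy₁Y⟩ : Yset α) ∈ Metric.ball y₀ ε := by
        rw [Metric.mem_ball, Subtype.dist_eq]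
        exact hdist
      exact hball this
    have hzx : z • x ∈ C k := by
      have := Submodule.sub_mem (C k) hy₁C hy₀C
      simpa using this
    have : z⁻¹ • (z • x) ∈ C k := Submodule.smul_mem _ _ hzx
    rwa [smul_smul, inv_mul_cancel₀ hznz, one_smul] at this
  -- conclude the statement with `β = k + 1`
  refine ⟨(k : ℝ) + 1, by positivity, ?_⟩
  intro φ hφ
  have hφ' : ∀ᵐ t : ℝ, t ∉ Icc (-α) α → (φ : ℝ → ℂ) t = 0 := hφ
  have hJφY : Jlin φ ∈ Yset α := by
    show ∀ᵐ t : ℝ, t ∉ Icc (-α) α → ((Jlin φ : XX) : ℝ → ℂ) t = 0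
    filter_upwards [coeFn_Jlin φ, hφ'] with t h1 h2 ht
    rw [h1]; exact h2 ht
  have hJφC : Jlin φ ∈ closure (M k : Set XX) := by
    have h5 : Jlin φ ∈ ((M k).topologicalClosure : Set XX) := hYC hJφY
    rwa [Submodule.topologicalClosure_coe] at h5
  apply mem_L1closure
  intro ε' hε'
  obtain ⟨x, hxM, hxd⟩ := Metric.mem_closure_iff.mp hJφC ε' hε'
  obtain ⟨ψ, hψmem, rfl⟩ := hxM
  obtain ⟨hψE, hψL⟩ := Submodule.mem_inf.mp hψmem
  refine ⟨ψ, ⟨hψE, Lset_mono (by linarith [Nat.cast_nonneg (α := ℝ) k] : (k : ℝ) ≤ (k : ℝ) + 1) hψL⟩, ?_⟩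
  rwa [dist_Jlin] at hxd
end

section
/- Let E be a shift-invariant subspace of ℒ. If E contains a weak delta sequence, then there exists α > 0 with Z(E_α) = ∅. -/
open MeasureTheory Complex Filter Set Topology

lemma integrable_mul_of_supp (g : ℝ → ℂ) (hg : Continuous g) (f : ℝ → ℂ)
    (hf : Integrable f) (α : ℝ) (hs : suppIn f (Icc (-α) α)) :
    Integrable (fun t => g t * f t) := by
  obtain ⟨C, hC⟩ := (isCompact_Icc (a := -α) (b := α)).exists_bound_of_continuousOn
    hg.continuousOn
  have heq : (fun t => (Icc (-α) α).indicator g t * f t) =ᵐ[volume] fun t => g t * f t := by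
    filter_upwards [hs] with t ht
    by_cases htm : t ∈ Icc (-α) α
    · rw [indicator_of_mem htm]
    · rw [ht htm, mul_zero, mul_zero]
  refine Integrable.congr ?_ heq
  refine hf.bdd_mul (c := max C 0) ?_ (Filter.Eventually.of_forall fun t => ?_)
  · exact (hg.measurable.indicator measurableSet_Icc).aestronglyMeasurable
  · by_cases htm : t ∈ Icc (-α) α
    · rw [indicator_of_mem htm]; exact le_max_of_le_left (hC t htm)
    · rw [indicator_of_notMem htm]; simp

lemma FT_tendsto_one (δ : ℕ → ℝ → ℂ) (hW : WeakDelta δ) (z : ℂ) :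
    Tendsto (fun n => FT (δ n) z) atTop (nhds 1) := by
  obtain ⟨hInt, ⟨α, hα, hsupp⟩, hT1, ⟨M, hM⟩, hsm⟩ := hW
  have hM0 : 0 ≤ M := le_trans (integral_nonneg fun t => norm_nonneg _) (hM 0)
  set g : ℝ → ℂ := fun t => Complex.exp (Complex.I * z * t) with hg_def
  have hg : Continuous g := by
    apply Complex.continuous_exp.comp
    exact (continuous_const.mul Complex.continuous_ofReal)
  have hg1 : Continuous (fun t => g t - 1) := hg.sub continuous_const
  -- bound of ‖g t - 1‖ on [-α, α]
  obtain ⟨C, hC⟩ := (isCompact_Icc (a := -α) (b := α)).exists_bound_of_continuousOn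
    (hg1.continuousOn (s := Icc (-α) α))
  have hC0 : 0 ≤ max C 0 := le_max_right _ _
  -- integrability
  have hintg : ∀ n, Integrable (fun t => g t * δ n t) := fun n =>
    integrable_mul_of_supp g hg (δ n) (hInt n) α (hsupp n)
  have hintg1 : ∀ n, Integrable (fun t => (g t - 1) * δ n t) := fun n =>
    integrable_mul_of_supp _ hg1 (δ n) (hInt n) α (hsupp n)
  -- main estimate
  rw [Metric.tendsto_atTop]
  intro ε hε
  set ε0 : ℝ := ε / (3 * (M + 1)) with hε0_def
  have hε0 : 0 < ε0 := by positivity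
  -- continuity at 0 : g 0 = 1
  have hg0 : Tendsto (fun t => g t - 1) (nhds 0) (nhds 0) := by
    have : (fun t => g t - 1) 0 = 0 := by simp [hg_def]
    simpa [this] using (hg1.tendsto 0)
  obtain ⟨r, hr, hball⟩ := Metric.eventually_nhds_iff.mp
    (hg0.eventually (Metric.ball_mem_nhds (0 : ℂ) hε0))
  -- tail estimate eventually small
  have htail := (hsm (r / 2) (by positivity)).eventually
    (Metric.ball_mem_nhds (0 : ℝ) (show 0 < ε / (3 * (max C 0 + 1)) by positivity))
  have hT1' := (Metric.tendsto_atTop.mp hT1) (ε / 3) (by positivity)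
  obtain ⟨N1, hN1⟩ := hT1'
  obtain ⟨N2, hN2⟩ := (eventually_atTop.mp htail)
  refine ⟨max N1 N2, fun n hn => ?_⟩
  have hn1 := hN1 n (le_trans (le_max_left _ _) hn)
  have hn2 := hN2 n (le_trans (le_max_right _ _) hn)
  -- the set s = {t | r/2 < |t|}
  set s : Set ℝ := {t : ℝ | r / 2 < |t|} with hs_def
  have hsmeas : MeasurableSet s := by
    have : IsOpen s := isOpen_lt continuous_const (continuous_abs)
    exact this.measurableSet
  -- difference
  have hdiff : FT (δ n) z - ∫ t, δ n t = ∫ t, (g t - 1) * δ n t := by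
    rw [show (∫ t, (g t - 1) * δ n t) = ∫ t, (g t * δ n t - δ n t) by
      congr 1; ext t; ring]
    rw [integral_sub (hintg n) (hInt n)]
    rfl
  -- pointwise ae bound on all of ℝ : ‖(g t - 1) * δ n t‖ ≤ max C 0 * ‖δ n t‖
  have haebound : ∀ᵐ t : ℝ, ‖(g t - 1) * δ n t‖ ≤ max C 0 * ‖δ n t‖ := by
    filter_upwards [hsupp n] with t ht
    by_cases htm : t ∈ Icc (-α) α
    · rw [norm_mul]
      exact mul_le_mul_of_nonneg_right (le_max_of_le_left (hC t htm)) (norm_nonneg _)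
    · rw [ht htm]; simp
  have hDint : Integrable (fun t => ‖(g t - 1) * δ n t‖) := (hintg1 n).norm
  have hnormint : Integrable (fun t => ‖δ n t‖) := (hInt n).norm
  -- split integral
  have hsplit : (∫ t, ‖(g t - 1) * δ n t‖) =
      (∫ t in s, ‖(g t - 1) * δ n t‖) + ∫ t in sᶜ, ‖(g t - 1) * δ n t‖ :=
    (integral_add_compl hsmeas hDint).symm
  -- bound on s
  have hbs : (∫ t in s, ‖(g t - 1) * δ n t‖) ≤ max C 0 * ∫ t in s, ‖δ n t‖ := by
    rw [← integral_const_mul]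
    refine setIntegral_mono_ae_restrict (hDint.integrableOn) ((hnormint.const_mul _).integrableOn)
      (ae_restrict_of_ae haebound)
  -- bound on sᶜ
  have hbsc : (∫ t in sᶜ, ‖(g t - 1) * δ n t‖) ≤ ε0 * ∫ t, ‖δ n t‖ := by
    have h1 : (∫ t in sᶜ, ‖(g t - 1) * δ n t‖) ≤ ∫ t in sᶜ, ε0 * ‖δ n t‖ := by
      refine setIntegral_mono_on (hDint.integrableOn) ((hnormint.const_mul _).integrableOn)
        hsmeas.compl (fun t ht => ?_)
      have htr : |t| ≤ r / 2 := le_of_not_gt ht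
      have : ‖g t - 1‖ < ε0 := by
        have := hball (y := t) (by simpa [Real.dist_eq] using lt_of_le_of_lt htr (by linarith))
        simpa [dist_eq_norm] using this
      rw [norm_mul]
      exact mul_le_mul_of_nonneg_right this.le (norm_nonneg _)
    refine h1.trans ?_
    rw [← integral_const_mul]
    refine setIntegral_le_integral (hnormint.const_mul _) ?_
    filter_upwards with t
    positivity
  -- tail small
  have htails : max C 0 * (∫ t in s, ‖δ n t‖) ≤ ε / 3 := by
    have h2 : (∫ t in s, ‖δ n t‖) < ε / (3 * (max C 0 + 1)) := by
      have := hn2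
      rw [Real.dist_eq] at this
      have hnn : 0 ≤ ∫ t in s, ‖δ n t‖ := integral_nonneg fun t => norm_nonneg _
      calc (∫ t in s, ‖δ n t‖) = |(∫ t in s, ‖δ n t‖) - 0| := by rw [sub_zero, _root_.abs_of_nonneg hnn]
      _ < _ := this
    calc max C 0 * (∫ t in s, ‖δ n t‖) ≤ max C 0 * (ε / (3 * (max C 0 + 1))) :=
          mul_le_mul_of_nonneg_left h2.le hC0
    _ ≤ ε / 3 := by
        rw [← mul_div_assoc, div_le_div_iff₀ (by positivity) (by norm_num : (0:ℝ) < 3)]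
        nlinarith
  have hsc : ε0 * (∫ t, ‖δ n t‖) ≤ ε / 3 := by
    calc ε0 * (∫ t, ‖δ n t‖) ≤ ε0 * M := mul_le_mul_of_nonneg_left (hM n) hε0.le
    _ ≤ ε / 3 := by
        rw [hε0_def, div_mul_eq_mul_div, div_le_div_iff₀ (by positivity) (by norm_num : (0:ℝ) < 3)]
        nlinarith
  -- combine
  have hkey : ‖FT (δ n) z - ∫ t, δ n t‖ ≤ 2 * ε / 3 := by
    rw [hdiff]
    calc ‖∫ t, (g t - 1) * δ n t‖ ≤ ∫ t, ‖(g t - 1) * δ n t‖ := norm_integral_le_integral_norm _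
    _ = _ := hsplit
    _ ≤ ε / 3 + ε / 3 := add_le_add (hbs.trans htails) (hbsc.trans hsc)
    _ = 2 * ε / 3 := by ring
  rw [dist_eq_norm]
  calc ‖FT (δ n) z - 1‖ = ‖(FT (δ n) z - ∫ t, δ n t) + ((∫ t, δ n t) - 1)‖ := by ring_nf
  _ ≤ ‖FT (δ n) z - ∫ t, δ n t‖ + ‖(∫ t, δ n t) - 1‖ := norm_add_le _ _
  _ < 2 * ε / 3 + ε / 3 := by
      refine add_lt_add_of_le_of_lt hkey ?_
      have := hn1; rw [dist_eq_norm] at this; exact this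
  _ = ε := by ring

open MeasureTheory Complex Filter Set in
/-- Theorem 3, (c) → (d): if a shift-invariant subspace `E` contains a weak delta
sequence, then `Z(E_α) = ∅` for some `α > 0`. -/
theorem weakDelta_implies_no_common_zero (E : Submodule ℂ LL)
    (hE : ShiftInv (E : Set LL))
    (hδ : ∃ δ : ℕ → LL, (∀ n, δ n ∈ E) ∧ WeakDelta (fun n => (δ n : ℝ → ℂ))) :
    ∃ α : ℝ, 0 < α ∧ ZE ((E : Set LL) ∩ Lset α) = ∅ := by
  obtain ⟨δ, hδE, hW⟩ := hδ
  obtain ⟨α, hα, hsupp⟩ := hW.2.1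
  refine ⟨α, hα, ?_⟩
  rw [eq_empty_iff_forall_notMem]
  intro z hz
  have htend := FT_tendsto_one _ hW z
  obtain ⟨n, hn⟩ := (htend.eventually_ne one_ne_zero).exists
  exact hn (mem_iInter₂.mp hz (δ n) ⟨hδE n, hsupp n⟩)
end
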